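/- arXiv:1906.02844 — 6 statements merged into one kernel-verified Lean document; each statement's English description precedes it below -/
import Mathlib

section
/- If M is a finite R-trivial monoid, then there is an ordering σ_1, …, σ_n of M such that every matrix U_σ is upper triangular; equivalently, any ordering with #σ_1M ≥ #σ_2M ≥ … ≥ #σ_nM works. -/
/-- If `M` is a finite `R`-trivial monoid and its elements are ordered so that the
cardinalities of the principal right ideals `σ_i M` are nonincreasing, then every
matrix `U_σ` is upper triangular. -/
theorem U_upper_triangular_of_Rtrivial
    {M : Type*} [Monoid M] [Fintype M] [DecidableEq M]
    (hR : ∀ σ τ : M, {x : M | ∃ μ, x = σ * μ} = {x : M | ∃ μ, x = τ * μ} → σ = τ)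
    (n : ℕ) (f : Fin n ≃ M)
    (hord : ∀ i j : Fin n, i ≤ j →
      ({x : M | ∃ μ, x = f j * μ}).ncard ≤ ({x : M | ∃ μ, x = f i * μ}).ncard) :
    ∀ (σ : M) (i j : Fin n), j < i →
      (if f i * σ = f j then (1 : ℤ) else 0) = 0 := by
  intro σ i j hji
  rw [if_neg]
  intro heq
  have hsub : {x : M | ∃ μ, x = f j * μ} ⊆ {x : M | ∃ μ, x = f i * μ} := by
    rintro x ⟨μ, rfl⟩
    exact ⟨σ * μ, by rw [← heq, mul_assoc]⟩
  have hle := hord j i hji.le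
  have hset := Set.eq_of_subset_of_ncard_le hsub hle (Set.toFinite _)
  have := hR _ _ hset.symm
  exact absurd (f.injective this) hji.ne'
end

section
/- For a finite R-trivial monoid with upper triangular realization, τ₁, τ₂ ∈ L_σ if and only if τ₁τ₂ ∈ L_σ. -/
/-- In a finite `R`-trivial monoid, `τ₁, τ₂ ∈ L_σ` if and only if `τ₁τ₂ ∈ L_σ`,
where `L_σ = {τ : στ = σ}`. -/
theorem mem_stabilizer_mul_iff
    {M : Type*} [Monoid M] [Fintype M]
    (hR : ∀ σ τ : M, {x : M | ∃ μ, x = σ * μ} = {x : M | ∃ μ, x = τ * μ} → σ = τ)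
    (σ τ₁ τ₂ : M) :
    (σ * τ₁ = σ ∧ σ * τ₂ = σ) ↔ σ * (τ₁ * τ₂) = σ := by
  constructor
  · rintro ⟨h1, h2⟩
    rw [← mul_assoc, h1, h2]
  · intro h
    have key : σ = σ * τ₁ := by
      apply hR
      ext x
      constructor
      · rintro ⟨μ, rfl⟩
        exact ⟨τ₂ * μ, by rw [← mul_assoc, mul_assoc σ τ₁ τ₂, h]⟩
      · rintro ⟨μ, rfl⟩
        exact ⟨τ₁ * μ, by rw [mul_assoc]⟩
    refine ⟨key.symm, ?_⟩
    calc σ * τ₂ = σ * τ₁ * τ₂ := by rw [← key]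
      _ = σ := by rw [mul_assoc, h]
end

section
/- For a generating set S of a finite R-trivial monoid M, two elements σ, σ' have L_σ = L_{σ'} if and only if L_σ ∩ S = L_{σ'} ∩ S. -/
/-- For a generating set `S` of a finite `R`-trivial monoid `M`, two elements
`σ, σ'` satisfy `L_σ = L_{σ'}` if and only if `L_σ ∩ S = L_{σ'} ∩ S`. -/
theorem looptype_eq_iff_on_generators
    {M : Type*} [Monoid M] [Fintype M]
    (hR : ∀ σ τ : M, {x : M | ∃ μ, x = σ * μ} = {x : M | ∃ μ, x = τ * μ} → σ = τ)
    (S : Set M) (hS : Submonoid.closure S = ⊤) (σ σ' : M) :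
    {τ : M | σ * τ = σ} = {τ : M | σ' * τ = σ'} ↔
      {τ : M | σ * τ = σ} ∩ S = {τ : M | σ' * τ = σ'} ∩ S := by
  constructor
  · intro h; rw [h]
  · intro h
    have key : ∀ a x y : M, a * (x * y) = a → a * x = a := by
      intro a x y hxy
      apply hR (a * x) a
      ext z
      constructor
      · rintro ⟨μ, rfl⟩
        exact ⟨x * μ, by rw [← mul_assoc]⟩
      · rintro ⟨μ, rfl⟩
        refine ⟨y * μ, ?_⟩
        rw [← mul_assoc, mul_assoc a x y, hxy]
    have main : ∀ (a b : M), ({τ : M | a * τ = a} ∩ S = {τ : M | b * τ = b} ∩ S) →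
        ∀ τ : M, a * τ = a → b * τ = b := by
      intro a b hab τ _
      have hτ : τ ∈ Submonoid.closure S := by rw [hS]; trivial
      induction hτ using Submonoid.closure_induction with
      | mem s hs =>
        rename_i has
        have : s ∈ {τ : M | b * τ = b} ∩ S := hab ▸ ⟨has, hs⟩
        exact this.1
      | one => exact mul_one b
      | mul x y hx hy ihx ihy =>
        rename_i hxy
        have hax : a * x = a := key a x y hxy
        have hay : a * y = a := by rw [← mul_assoc, hax] at hxy; exact hxy
        have := ihy hay
        rw [← mul_assoc, ihx hax, this]
    ext τ
    exact ⟨fun hτ => main σ σ' h τ hτ, fun hτ => main σ' σ h.symm τ hτ⟩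
end

section
/- If U is an n×n integer upper triangular matrix with only 0s and 1s on the diagonal, d of which are 1s, then for a ≥ n−d and b ≥ d, the matrix Id − (Id − U^a)^b is idempotent and has the same diagonal as U. -/
open Polynomial

/-- Product of upper triangular matrices is upper triangular, with multiplicative diagonal. -/
lemma tri_mul_aux {n : ℕ} {A B : Matrix (Fin n) (Fin n) ℤ}
    (hA : ∀ i j : Fin n, j < i → A i j = 0) (hB : ∀ i j : Fin n, j < i → B i j = 0) :
    (∀ i j : Fin n, j < i → (A * B) i j = 0) ∧ ∀ i : Fin n, (A * B) i i = A i i * B i i := by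
  constructor
  · intro i j hij
    rw [Matrix.mul_apply]
    apply Finset.sum_eq_zero
    intro k _
    rcases lt_or_ge k i with h | h
    · rw [hA i k h, zero_mul]
    · rw [hB k j (lt_of_lt_of_le hij h), mul_zero]
  · intro i
    rw [Matrix.mul_apply]
    apply Finset.sum_eq_single i
    · intro k _ hk
      rcases lt_or_gt_of_ne hk with h | h
      · rw [hA i k h, zero_mul]
      · rw [hB k i h, mul_zero]
    · intro h; exact absurd (Finset.mem_univ i) h

lemma tri_pow_aux {n : ℕ} {A : Matrix (Fin n) (Fin n) ℤ}
    (hA : ∀ i j : Fin n, j < i → A i j = 0) (m : ℕ) :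
    (∀ i j : Fin n, j < i → (A ^ m) i j = 0) ∧ ∀ i : Fin n, (A ^ m) i i = (A i i) ^ m := by
  induction m with
  | zero =>
    simp only [pow_zero]
    exact ⟨fun i j hij => Matrix.one_apply_ne hij.ne', fun i => by simp [Matrix.one_apply_eq]⟩
  | succ m ih =>
    rw [pow_succ]
    obtain ⟨ih1, ih2⟩ := ih
    obtain ⟨h1, h2⟩ := tri_mul_aux ih1 hA
    exact ⟨h1, fun i => by rw [h2 i, ih2 i, pow_succ]⟩

/-- If `U` is an integer upper triangular `n × n` matrix with only `0`s and `1`s on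
the diagonal, `d` of which are ones, then for `a ≥ n − d` and `b ≥ d` the matrix
`Id − (Id − U^a)^b` is idempotent and has the same diagonal as `U`. -/
theorem P_ab_idempotent_same_diag
    {n : ℕ} (U : Matrix (Fin n) (Fin n) ℤ)
    (htri : ∀ i j : Fin n, j < i → U i j = 0)
    (hdiag : ∀ i : Fin n, U i i = 0 ∨ U i i = 1)
    (d : ℕ) (hd : d = (Finset.univ.filter (fun i : Fin n => U i i = 1)).card)
    (a b : ℕ) (ha : n - d ≤ a) (hb : d ≤ b) :
    (1 - (1 - U ^ a) ^ b) * (1 - (1 - U ^ a) ^ b) = 1 - (1 - U ^ a) ^ b ∧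
    ∀ i : Fin n, (1 - (1 - U ^ a) ^ b) i i = U i i := by
  have hdn : d ≤ n := by
    rw [hd]
    exact (Finset.card_filter_le _ _).trans (by simp)
  have hcard : (Finset.filter (fun i : Fin n => ¬ U i i = 1) Finset.univ).card = n - d := by
    have h := Finset.card_filter_add_card_filter_not
      (s := Finset.univ) (p := fun i : Fin n => U i i = 1)
    simp only [Finset.card_univ, Fintype.card_fin] at h
    omega
  -- characteristic polynomial
  have hbt : U.BlockTriangular id := fun i j hij => htri i j hij
  have hcp : U.charpoly = (X - 1) ^ d * X ^ (n - d) := by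
    rw [Matrix.charpoly_of_upperTriangular U hbt]
    rw [← Finset.prod_filter_mul_prod_filter_not Finset.univ (fun i : Fin n => U i i = 1)]
    congr 1
    · rw [Finset.prod_congr rfl (fun i hi => by
        rw [(Finset.mem_filter.mp hi).2, Polynomial.C_1]), Finset.prod_const, hd]
    · rw [Finset.prod_congr rfl (fun i hi => by
        have h0 := (hdiag i).resolve_right (Finset.mem_filter.mp hi).2
        rw [h0, Polynomial.C_0, sub_zero]), Finset.prod_const, hcard]
  have hz : (U - 1) ^ d * U ^ (n - d) = 0 := by
    have h0 := Matrix.aeval_self_charpoly U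
    rw [hcp] at h0
    simpa using h0
  constructor
  · -- idempotency
    set q : ℤ[X] := 1 - (1 - X ^ a) ^ b with hq
    have h1 : (X : ℤ[X]) ^ (n - d) ∣ q := by
      refine dvd_trans (pow_dvd_pow X ha) ?_
      have h := sub_dvd_pow_sub_pow (1 : ℤ[X]) (1 - X ^ a) b
      simpa [hq] using h
    have h2 : ((X : ℤ[X]) - 1) ^ d ∣ (1 - X ^ a) ^ b := by
      have hstep : ((X : ℤ[X]) - 1) ∣ (1 - X ^ a) := by
        have h := sub_dvd_pow_sub_pow (X : ℤ[X]) 1 a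
        simp only [one_pow] at h
        rw [show (1 : ℤ[X]) - X ^ a = -(X ^ a - 1) by ring]
        exact dvd_neg.mpr h
      calc ((X : ℤ[X]) - 1) ^ d ∣ (1 - X ^ a) ^ d := pow_dvd_pow_of_dvd hstep d
        _ ∣ (1 - X ^ a) ^ b := pow_dvd_pow _ hb
    have hdvd : ((X : ℤ[X]) - 1) ^ d * X ^ (n - d) ∣ q * q - q := by
      have h : q * q - q = -((1 - X ^ a) ^ b * q) := by rw [hq]; ring
      rw [h]
      exact dvd_neg.mpr (mul_dvd_mul h2 h1)
    obtain ⟨c, hc⟩ := hdvd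
    have hPq : aeval U q = 1 - (1 - U ^ a) ^ b := by
      rw [hq]
      simp only [_root_.map_sub, _root_.map_one, map_pow, aeval_X]
    have hA : (1 - (1 - U ^ a) ^ b) * (1 - (1 - U ^ a) ^ b) - (1 - (1 - U ^ a) ^ b)
        = aeval U (q * q - q) := by
      rw [_root_.map_sub, _root_.map_mul, hPq]
    have hB : aeval U (q * q - q) = 0 := by
      rw [hc, _root_.map_mul, _root_.map_mul, map_pow, map_pow, _root_.map_sub,
        _root_.map_one, aeval_X, hz, zero_mul]
    exact sub_eq_zero.mp (hA.trans hB)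
  · -- diagonal
    intro i
    obtain ⟨hpow_tri, hpow_diag⟩ := tri_pow_aux htri a
    have hsub_tri : ∀ i j : Fin n, j < i → (1 - U ^ a) i j = 0 := by
      intro i j hij
      rw [Matrix.sub_apply, Matrix.one_apply_ne hij.ne', hpow_tri i j hij, sub_zero]
    obtain ⟨_, hdiag2⟩ := tri_pow_aux hsub_tri b
    have key : (1 - (1 - U ^ a) ^ b) i i = 1 - (1 - (U i i) ^ a) ^ b := by
      rw [Matrix.sub_apply, Matrix.one_apply_eq, hdiag2 i, Matrix.sub_apply,
        Matrix.one_apply_eq, hpow_diag i]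
    rw [key]
    rcases hdiag i with h0 | h1
    · have han : 1 ≤ a := by
        by_contra hcon
        have ha0 : a = 0 := by omega
        have hdn' : d = n := by omega
        have huniv : Finset.univ.filter (fun i : Fin n => U i i = 1) = Finset.univ := by
          apply Finset.eq_univ_of_card
          rw [← hd, hdn', Fintype.card_fin]
        have h1' : U i i = 1 := by
          have hi : i ∈ Finset.univ.filter (fun i : Fin n => U i i = 1) := by
            rw [huniv]; exact Finset.mem_univ i
          exact (Finset.mem_filter.mp hi).2
        rw [h1'] at h0; exact one_ne_zero h0
      rw [h0, zero_pow (by omega), sub_zero, one_pow, sub_self]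
    · have hbn : 1 ≤ b := by
        have : 1 ≤ d := by
          rw [hd]
          exact Finset.card_pos.mpr ⟨i, Finset.mem_filter.mpr ⟨Finset.mem_univ i, h1⟩⟩
        omega
      rw [h1, one_pow, sub_self, zero_pow (by omega), sub_zero]
end

section
/- The element T_{[σ]} = (∏_{τ ∈ L_σ∩S} U_τ)(∏_{κ ∈ S∖L_σ} (Id − U_κ)) has diagonal entry 1 at μ if L_μ = L_σ and 0 otherwise. -/
/-!
In an `R`-trivial monoid divisibility `a ∣ b` (i.e. `b ∈ aM`) is a partial order, and every
`U_τ` and `1 - U_κ` is supported on it. Products of such matrices stay supported on it and have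
as diagonal the product of the diagonals, so `T_{[σ]} μ μ` is the product of the indicators of
`μ τ = μ` for `τ ∈ L_σ ∩ S` and of `μ κ ≠ μ` for `κ ∈ S ∖ L_σ`; it is `1` iff
`L_μ ∩ S = L_σ ∩ S`. Finally `L_μ` is a submonoid from which `τ₁ τ₂ ∈ L_μ` forces `τ₁ ∈ L_μ`
(as `μ ∣ μ τ₁ ∣ μ`), so `L_μ` is determined by `L_μ ∩ S` when `S` generates `M`.
-/

namespace Matrix

variable {ι R : Type*} (r : ι → ι → Prop)

def SupportedIn [Zero R] (A : Matrix ι ι R) : Prop := ∀ i j, A i j ≠ 0 → r i j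

variable {r}

lemma supportedIn_one [DecidableEq ι] [Zero R] [One R] [Std.Refl r] :
    SupportedIn r (1 : Matrix ι ι R) := by
  intro i j hij
  obtain rfl : i = j := by_contra fun h => hij (one_apply_ne h)
  exact refl_of r i

lemma SupportedIn.sub [AddGroup R] {A B : Matrix ι ι R} (hA : SupportedIn r A)
    (hB : SupportedIn r B) : SupportedIn r (A - B) := by
  intro i j hij
  by_contra h
  exact hij (by simp [sub_apply, not_imp_comm.mp (hA i j) h, not_imp_comm.mp (hB i j) h])

section Mul

variable [Fintype ι] [NonUnitalNonAssocSemiring R]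

lemma SupportedIn.mul [IsTrans ι r] {A B : Matrix ι ι R} (hA : SupportedIn r A)
    (hB : SupportedIn r B) : SupportedIn r (A * B) := by
  intro i j hij
  obtain ⟨k, -, hk⟩ := Finset.exists_ne_zero_of_sum_ne_zero hij
  exact trans_of r (hA i k (left_ne_zero_of_mul hk)) (hB k j (right_ne_zero_of_mul hk))

lemma SupportedIn.mul_apply_self [Std.Antisymm r] {A B : Matrix ι ι R}
    (hA : SupportedIn r A) (hB : SupportedIn r B) (i : ι) : (A * B) i i = A i i * B i i := by
  refine Finset.sum_eq_single i (fun k _ hki => ?_) (by simp)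
  by_contra hne
  exact hki (antisymm_of r (hB k i (right_ne_zero_of_mul hne)) (hA i k (left_ne_zero_of_mul hne)))

end Mul

variable [Fintype ι] [DecidableEq ι] [Semiring R] [Std.Refl r] [IsTrans ι r]

lemma SupportedIn.list_prod {l : List (Matrix ι ι R)} (hl : ∀ A ∈ l, SupportedIn r A) :
    SupportedIn r l.prod := by
  induction l with
  | nil => exact supportedIn_one
  | cons A l ih =>
    simp only [List.forall_mem_cons] at hl
    exact hl.1.mul (ih hl.2)

lemma list_prod_apply_self_of_supportedIn [Std.Antisymm r] {l : List (Matrix ι ι R)}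
    (hl : ∀ A ∈ l, SupportedIn r A) (i : ι) : l.prod i i = (l.map fun A => A i i).prod := by
  induction l with
  | nil => simp
  | cons A l ih =>
    simp only [List.forall_mem_cons] at hl
    rw [List.prod_cons, hl.1.mul_apply_self (SupportedIn.list_prod hl.2), ih hl.2, List.map_cons,
      List.prod_cons]

end Matrix

def IsRTrivial (M : Type*) [Monoid M] : Prop := ∀ a b : M, {x | a ∣ x} = {x | b ∣ x} → a = b

namespace IsRTrivial

variable {M : Type*} [Monoid M]

lemma eq_of_dvd_of_dvd (hR : IsRTrivial M) {a b : M} (hab : a ∣ b) (hba : b ∣ a) : a = b :=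
  hR a b (Set.ext fun _ => ⟨hba.trans, hab.trans⟩)

lemma mul_eq_self_of_mul_mul_eq_self (hR : IsRTrivial M) {a x y : M} (h : a * (x * y) = a) :
    a * x = a :=
  hR.eq_of_dvd_of_dvd ⟨y, by rw [mul_assoc, h]⟩ (dvd_mul_right a x)

lemma mul_eq_self_of_forall_mem_closure (hR : IsRTrivial M) {S : Set M}
    (hS : Submonoid.closure S = ⊤) {a b : M}
    (h : ∀ s ∈ S, a * s = a → b * s = b) (τ : M) : a * τ = a → b * τ = b := by
  induction (hS ▸ Submonoid.mem_top τ : τ ∈ Submonoid.closure S) using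
    Submonoid.closure_induction with
  | mem s hs => exact h s hs
  | one => simp
  | mul x y _ _ ihx ihy =>
    intro hxy
    have hx := hR.mul_eq_self_of_mul_mul_eq_self hxy
    rw [← mul_assoc, hx] at hxy
    rw [← mul_assoc, ihx hx, ihy hxy]

lemma setOf_mul_eq_self_eq_iff (hR : IsRTrivial M) {S : Set M} (hS : Submonoid.closure S = ⊤)
    {a b : M} :
    {τ | a * τ = a} = {τ | b * τ = b} ↔ ∀ s ∈ S, (b * s = b ↔ a * s = a) := by
  refine ⟨fun h s _ => (Set.ext_iff.mp h s).symm, fun h => Set.ext fun τ => ⟨?_, ?_⟩⟩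
  · exact hR.mul_eq_self_of_forall_mem_closure hS (fun s hs => (h s hs).mpr) τ
  · exact hR.mul_eq_self_of_forall_mem_closure hS (fun s hs => (h s hs).mp) τ

end IsRTrivial

section RightMulMatrix

variable (R : Type*) {M : Type*} [Monoid M] [DecidableEq M]

def rightMulMatrix [Zero R] [One R] (τ : M) : Matrix M M R :=
  Matrix.of fun a b => if a * τ = b then 1 else 0

variable {R}

lemma rightMulMatrix_apply_self [Zero R] [One R] (τ μ : M) :
    rightMulMatrix R τ μ μ = if μ * τ = μ then 1 else 0 := rfl

lemma one_sub_rightMulMatrix_apply_self [AddGroupWithOne R] (τ μ : M) :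
    (1 - rightMulMatrix R τ) μ μ = if μ * τ = μ then 0 else 1 := by
  rw [Matrix.sub_apply, Matrix.one_apply_eq, rightMulMatrix_apply_self]
  split_ifs <;> simp

lemma supportedIn_dvd_rightMulMatrix [Zero R] [One R] (τ : M) :
    (rightMulMatrix R τ).SupportedIn (· ∣ ·) := by
  intro a b hab
  by_contra h
  exact hab (if_neg fun e => h ⟨τ, e.symm⟩)

end RightMulMatrix

/-- The element `T_{[σ]}`, the product (in any order) of the `U_τ` for
`τ ∈ L_σ ∩ S` and the `Id − U_κ` for `κ ∈ S ∖ L_σ`, has diagonal entry `1` at `μ`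
if `L_μ = L_σ` and `0` otherwise. -/
theorem T_class_diag
    {M : Type*} [Monoid M] [Fintype M] [DecidableEq M]
    (hR : ∀ σ τ : M, {x : M | ∃ μ, x = σ * μ} = {x : M | ∃ μ, x = τ * μ} → σ = τ)
    (S : Finset M) (hS : Submonoid.closure (S : Set M) = ⊤)
    (U : M → Matrix M M ℤ)
    (hU : ∀ τ, U τ = Matrix.of fun a b : M => if a * τ = b then (1 : ℤ) else 0)
    (σ : M) (l : List (Matrix M M ℤ))
    (hl : l.Perm (((S.filter (fun τ => σ * τ = σ)).toList.map U) ++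
      ((S.filter (fun κ => ¬ σ * κ = σ)).toList.map (fun κ => 1 - U κ)))) :
    ∀ μ : M, l.prod μ μ =
      if {τ : M | μ * τ = μ} = {τ : M | σ * τ = σ} then 1 else 0 := by
  intro μ
  have : Std.Refl (α := M) (· ∣ ·) := ⟨dvd_refl⟩
  have : Std.Antisymm (α := M) (· ∣ ·) := ⟨fun _ _ => IsRTrivial.eq_of_dvd_of_dvd hR⟩
  obtain rfl : U = rightMulMatrix ℤ := funext hU
  have hsupp : ∀ A ∈ l, A.SupportedIn (· ∣ ·) := by
    intro A hA
    rcases List.mem_append.mp (hl.mem_iff.mp hA) with h | h <;>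
      obtain ⟨τ, -, rfl⟩ := List.mem_map.mp h
    · exact supportedIn_dvd_rightMulMatrix τ
    · exact Matrix.supportedIn_one.sub (supportedIn_dvd_rightMulMatrix τ)
  rw [Matrix.list_prod_apply_self_of_supportedIn hsupp, (hl.map _).prod_eq, List.map_append,
    List.prod_append, List.map_map, List.map_map, Finset.prod_map_toList, Finset.prod_map_toList]
  calc _ = ∏ s ∈ S, (if (σ * s = σ ↔ μ * s = μ) then 1 else 0 : ℤ) := by
        rw [← Finset.prod_filter_mul_prod_filter_not S (fun s => σ * s = σ)]
        congr 1 <;> refine Finset.prod_congr rfl fun s hs => ?_ <;>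
          simp only [Function.comp_apply, rightMulMatrix_apply_self,
            one_sub_rightMulMatrix_apply_self, (Finset.mem_filter.mp hs).2, true_iff, false_iff,
            ite_not]
    _ = _ := by
      simp only [Finset.prod_boole, IsRTrivial.setOf_mul_eq_self_eq_iff hR hS, Finset.mem_coe]
      congr
end

section
/- An idempotent upper triangular integer matrix whose set of diagonal ones corresponds to a single loop-type class is primitive: it cannot be written as a sum of two nonzero orthogonal idempotents in the image algebra. -/
set_option linter.unusedSectionVars false
set_option linter.unusedVariables false
section Aux
variable {M : Type*} [Monoid M] [Fintype M] [DecidableEq M]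

lemma aux_antisymm (hR : ∀ σ τ : M, {x : M | ∃ μ, x = σ * μ} = {x : M | ∃ μ, x = τ * μ} → σ = τ)
    {a b : M} (h1 : ∃ μ, b = a * μ) (h2 : ∃ μ, a = b * μ) : a = b := by
  obtain ⟨μ, hμ⟩ := h1
  obtain ⟨ν, hν⟩ := h2
  apply hR
  ext x
  simp only [Set.mem_setOf_eq]
  constructor
  · rintro ⟨t, rfl⟩
    exact ⟨ν * t, by rw [← mul_assoc, ← hν]⟩
  · rintro ⟨t, rfl⟩
    exact ⟨μ * t, by rw [← mul_assoc, ← hμ]⟩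

lemma aux_tri (U : M → Matrix M M ℤ)
    (hU : ∀ τ, U τ = Matrix.of fun a b : M => if a * τ = b then (1 : ℤ) else 0)
    {A : Matrix M M ℤ} (hA : A ∈ Submodule.span ℤ (Set.range U))
    {a b : M} (h : ¬ ∃ μ, b = a * μ) : A a b = 0 := by
  induction hA using Submodule.span_induction with
  | mem x hx =>
    obtain ⟨τ, rfl⟩ := hx
    rw [hU]
    simp only [Matrix.of_apply]
    exact if_neg fun he => h ⟨τ, he.symm⟩
  | zero => simp
  | add x y _ _ hx hy => simp [Matrix.add_apply, hx, hy]
  | smul c x _ hx => simp [Matrix.smul_apply, hx]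

lemma aux_diag (U : M → Matrix M M ℤ)
    (hU : ∀ τ, U τ = Matrix.of fun a b : M => if a * τ = b then (1 : ℤ) else 0)
    {A : Matrix M M ℤ} (hA : A ∈ Submodule.span ℤ (Set.range U))
    {σ σ' : M} (h : {τ : M | σ * τ = σ} = {τ : M | σ' * τ = σ'}) :
    A σ σ = A σ' σ' := by
  induction hA using Submodule.span_induction with
  | mem x hx =>
    obtain ⟨τ, rfl⟩ := hx
    rw [hU]
    simp only [Matrix.of_apply]
    have hiff : (σ * τ = σ) ↔ (σ' * τ = σ') := by
      rw [Set.ext_iff] at h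
      exact h τ
    by_cases hc : σ * τ = σ
    · rw [if_pos hc, if_pos (hiff.mp hc)]
    · rw [if_neg hc, if_neg (fun hc' => hc (hiff.mpr hc'))]
  | zero => simp
  | add x y _ _ hx hy => simp [Matrix.add_apply, hx, hy]
  | smul c x _ hx => simp [Matrix.smul_apply, hx]

lemma aux_mul_diag (hR : ∀ σ τ : M, {x : M | ∃ μ, x = σ * μ} = {x : M | ∃ μ, x = τ * μ} → σ = τ)
    (U : M → Matrix M M ℤ)
    (hU : ∀ τ, U τ = Matrix.of fun a b : M => if a * τ = b then (1 : ℤ) else 0)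
    {A B : Matrix M M ℤ} (hA : A ∈ Submodule.span ℤ (Set.range U))
    (hB : B ∈ Submodule.span ℤ (Set.range U)) (σ : M) :
    (A * B) σ σ = A σ σ * B σ σ := by
  rw [Matrix.mul_apply]
  apply Finset.sum_eq_single_of_mem σ (Finset.mem_univ σ)
  intro c _ hcσ
  by_cases hc : A σ c = 0
  · rw [hc, zero_mul]
  · by_cases hc' : B c σ = 0
    · rw [hc', mul_zero]
    · exfalso
      have h1 : ∃ μ, c = σ * μ := by
        by_contra hcon; exact hc (aux_tri U hU hA hcon)
      have h2 : ∃ μ, σ = c * μ := by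
        by_contra hcon; exact hc' (aux_tri U hU hB hcon)
      exact hcσ (aux_antisymm hR h2 h1)

lemma aux_zero (hR : ∀ σ τ : M, {x : M | ∃ μ, x = σ * μ} = {x : M | ∃ μ, x = τ * μ} → σ = τ)
    (U : M → Matrix M M ℤ)
    (hU : ∀ τ, U τ = Matrix.of fun a b : M => if a * τ = b then (1 : ℤ) else 0)
    {A : Matrix M M ℤ} (hA : A ∈ Submodule.span ℤ (Set.range U))
    (hAA : A * A = A) (hdiag : ∀ σ, A σ σ = 0) : A = 0 := by
  classical
  have key : ∀ n (a : M), (Finset.univ.filter (fun x => ∃ μ, x = a * μ)).card ≤ n →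
      ∀ b, A a b = 0 := by
    intro n
    induction n with
    | zero =>
      intro a ha b
      exfalso
      have : a ∈ Finset.univ.filter (fun x => ∃ μ, x = a * μ) := by
        simp only [Finset.mem_filter, Finset.mem_univ, true_and]
        exact ⟨1, (mul_one a).symm⟩
      have := Finset.card_pos.mpr ⟨a, this⟩
      omega
    | succ n ih =>
      intro a ha b
      rw [← hAA, Matrix.mul_apply]
      apply Finset.sum_eq_zero
      intro c _
      by_cases hc : A a c = 0
      · rw [hc, zero_mul]
      · have hμ : ∃ μ, c = a * μ := by
          by_contra hcon; exact hc (aux_tri U hU hA hcon)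
        by_cases hca : c = a
        · subst hca; rw [hdiag, zero_mul]
        · have hlt : (Finset.univ.filter (fun x => ∃ μ, x = c * μ)).card <
              (Finset.univ.filter (fun x => ∃ μ, x = a * μ)).card := by
            apply Finset.card_lt_card
            constructor
            · intro x hx
              simp only [Finset.mem_filter, Finset.mem_univ, true_and] at hx ⊢
              obtain ⟨t, rfl⟩ := hx
              obtain ⟨μ, rfl⟩ := hμ
              exact ⟨μ * t, by rw [mul_assoc]⟩
            · intro hsub
              have ha' : a ∈ Finset.univ.filter (fun x => ∃ μ, x = a * μ) := by
                simp only [Finset.mem_filter, Finset.mem_univ, true_and]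
                exact ⟨1, (mul_one a).symm⟩
              have := hsub ha'
              simp only [Finset.mem_filter, Finset.mem_univ, true_and] at this
              exact hca (aux_antisymm hR hμ this).symm
          have hle : (Finset.univ.filter (fun x => ∃ μ, x = c * μ)).card ≤ n := by omega
          rw [ih c hle b, mul_zero]
  ext a b
  exact key (Fintype.card M) a (le_trans (Finset.card_filter_le _ _) (by simp)) b

lemma aux_diag01 (hR : ∀ σ τ : M, {x : M | ∃ μ, x = σ * μ} = {x : M | ∃ μ, x = τ * μ} → σ = τ)
    (U : M → Matrix M M ℤ)
    (hU : ∀ τ, U τ = Matrix.of fun a b : M => if a * τ = b then (1 : ℤ) else 0)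
    {A : Matrix M M ℤ} (hA : A ∈ Submodule.span ℤ (Set.range U))
    (hAA : A * A = A) (σ : M) : A σ σ = 0 ∨ A σ σ = 1 := by
  have h : A σ σ * A σ σ = A σ σ := by
    rw [← aux_mul_diag hR U hU hA hA σ, hAA]
  have h2 : A σ σ * (A σ σ - 1) = 0 := by linear_combination h
  rcases mul_eq_zero.mp h2 with h3 | h3
  · exact Or.inl h3
  · exact Or.inr (by linarith)

end Aux

/-- An idempotent in the upper triangular realization `U_M^ℤ` of a finite
`R`-trivial monoid whose set of diagonal ones is exactly one loop-type class is
primitive: if it is a sum of two orthogonal idempotents of the algebra, one of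
them is zero. -/
theorem idempotent_single_looptype_primitive
    {M : Type*} [Monoid M] [Fintype M] [DecidableEq M]
    (hR : ∀ σ τ : M, {x : M | ∃ μ, x = σ * μ} = {x : M | ∃ μ, x = τ * μ} → σ = τ)
    (U : M → Matrix M M ℤ)
    (hU : ∀ τ, U τ = Matrix.of fun a b : M => if a * τ = b then (1 : ℤ) else 0)
    (E : Matrix M M ℤ) (hEmem : E ∈ Submodule.span ℤ (Set.range U))
    (hEidem : E * E = E)
    (hclass : ∃ σ₀ : M, ∀ σ : M,
      E σ σ = 1 ↔ {τ : M | σ * τ = σ} = {τ : M | σ₀ * τ = σ₀})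
    (X Y : Matrix M M ℤ)
    (hXmem : X ∈ Submodule.span ℤ (Set.range U))
    (hYmem : Y ∈ Submodule.span ℤ (Set.range U))
    (hX : X * X = X) (hY : Y * Y = Y)
    (hXY : X * Y = 0) (hYX : Y * X = 0)
    (hsum : E = X + Y) :
    X = 0 ∨ Y = 0 := by
  obtain ⟨σ₀, hσ₀⟩ := hclass
  -- products of diagonals vanish
  have hprod : ∀ σ : M, X σ σ * Y σ σ = 0 := by
    intro σ
    rw [← aux_mul_diag hR U hU hXmem hYmem σ, hXY, Matrix.zero_apply]
  -- sum of diagonals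
  have hsumd : ∀ σ : M, E σ σ = X σ σ + Y σ σ := by
    intro σ; rw [hsum, Matrix.add_apply]
  -- diagonal entries are 0 or 1
  have hX01 := aux_diag01 hR U hU hXmem hX
  have hY01 := aux_diag01 hR U hU hYmem hY
  have hE01 := aux_diag01 hR U hU hEmem hEidem
  -- E σ₀ σ₀ = 1
  have hE1 : E σ₀ σ₀ = 1 := (hσ₀ σ₀).mpr rfl
  -- off the class, all diagonals vanish
  have hoff : ∀ σ : M, ¬ ({τ : M | σ * τ = σ} = {τ : M | σ₀ * τ = σ₀}) →
      X σ σ = 0 ∧ Y σ σ = 0 := by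
    intro σ hn
    have hE0 : E σ σ = 0 := by
      rcases hE01 σ with h | h
      · exact h
      · exact absurd ((hσ₀ σ).mp h) hn
    have := hsumd σ
    rcases hX01 σ with hx | hx <;> rcases hY01 σ with hy | hy <;> omega
  rcases hX01 σ₀ with hx0 | hx0
  · -- X has zero diagonal everywhere, so X = 0
    left
    apply aux_zero hR U hU hXmem hX
    intro σ
    by_cases hc : {τ : M | σ * τ = σ} = {τ : M | σ₀ * τ = σ₀}
    · rw [aux_diag U hU hXmem hc]; exact hx0
    · exact (hoff σ hc).1
  · -- Y σ₀ σ₀ = 0, so Y has zero diagonal everywhere, so Y = 0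
    right
    have hy0 : Y σ₀ σ₀ = 0 := by
      have := hprod σ₀; rw [hx0, one_mul] at this; exact this
    apply aux_zero hR U hU hYmem hY
    intro σ
    by_cases hc : {τ : M | σ * τ = σ} = {τ : M | σ₀ * τ = σ₀}
    · rw [aux_diag U hU hYmem hc]; exact hy0
    · exact (hoff σ hc).2
end
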